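/- Conversely, let V be a smooth (1,1)-tensor field with m distinct eigenvalue functions μ¹,...,μᵐ and eigenvector fields X₁,...,Xₘ. If the Haantjes tensor of V vanishes identically, then for every pair i ≠ j the vector N(Xᵢ,Xⱼ) lies in the span of Xᵢ and Xⱼ at every point. -/

import Mathlib

/-- Partial derivative with respect to the p-th coordinate. -/
noncomputable def pd {m : ℕ} (f : (Fin m → ℝ) → ℝ) (x : Fin m → ℝ) (p : Fin m) : ℝ :=
  fderiv ℝ f x (Pi.single p 1)

/-- Lie bracket of vector fields on (an open subset of) ℝᵐ. -/
noncomputable def bracket {m : ℕ} (X Y : (Fin m → ℝ) → (Fin m → ℝ)) :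
    (Fin m → ℝ) → (Fin m → ℝ) :=
  fun x i => ∑ j, (X x j * pd (fun y => Y y i) x j - Y x j * pd (fun y => X y i) x j)

/-- Pointwise action of the (1,1)-tensor field v on a vector field. -/
def vapp {m : ℕ} (v : (Fin m → ℝ) → Fin m → Fin m → ℝ)
    (X : (Fin m → ℝ) → (Fin m → ℝ)) : (Fin m → ℝ) → (Fin m → ℝ) :=
  fun x i => ∑ j, v x i j * X x j

/-- The Nijenhuis tensor in invariant form: N(X,Y) = [VX,VY] + V²[X,Y] − V[X,VY] − V[VX,Y]. -/
noncomputable def nInv {m : ℕ} (v : (Fin m → ℝ) → Fin m → Fin m → ℝ)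
    (X Y : (Fin m → ℝ) → (Fin m → ℝ)) : (Fin m → ℝ) → (Fin m → ℝ) :=
  bracket (vapp v X) (vapp v Y) + vapp v (vapp v (bracket X Y))
    - vapp v (bracket X (vapp v Y)) - vapp v (bracket (vapp v X) Y)

/-- The Haantjes tensor in invariant form:
H(X,Y) = V²N(X,Y) − VN(VX,Y) − VN(X,VY) + N(VX,VY). -/
noncomputable def hInv {m : ℕ} (v : (Fin m → ℝ) → Fin m → Fin m → ℝ)
    (X Y : (Fin m → ℝ) → (Fin m → ℝ)) : (Fin m → ℝ) → (Fin m → ℝ) :=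
  vapp v (vapp v (nInv v X Y)) - vapp v (nInv v (vapp v X) Y)
    - vapp v (nInv v X (vapp v Y)) + nInv v (vapp v X) (vapp v Y)

lemma pd_mul {m : ℕ} {f g : (Fin m → ℝ) → ℝ} {x : Fin m → ℝ} (hf : DifferentiableAt ℝ f x)
    (hg : DifferentiableAt ℝ g x) (p : Fin m) :
    pd (fun y => f y * g y) x p = f x * pd g x p + g x * pd f x p := by
  unfold pd
  rw [fderiv_fun_mul hf hg]
  simp

lemma bracket_antisymm {m : ℕ} (X Y : (Fin m → ℝ) → (Fin m → ℝ)) (x : Fin m → ℝ) :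
    bracket X Y x = - bracket Y X x := by
  funext i
  simp only [bracket, Pi.neg_apply, ← Finset.sum_neg_distrib]
  exact Finset.sum_congr rfl fun j _ => by ring

lemma bracket_smul_left {m : ℕ} (f : (Fin m → ℝ) → ℝ) (X Y : (Fin m → ℝ) → (Fin m → ℝ))
    (x : Fin m → ℝ) (hf : DifferentiableAt ℝ f x)
    (hX : ∀ i, DifferentiableAt ℝ (fun y => X y i) x) :
    bracket (fun y => f y • X y) Y x
      = f x • bracket X Y x - (∑ p, Y x p * pd f x p) • X x := by
  funext i
  have key : ∀ j, pd (fun y => f y * X y i) x j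
      = f x * pd (fun y => X y i) x j + X x i * pd f x j :=
    fun j => pd_mul hf (hX i) j
  simp only [bracket, Pi.smul_apply, Pi.sub_apply, smul_eq_mul, key, Finset.mul_sum,
    Finset.sum_mul, ← Finset.sum_sub_distrib]
  exact Finset.sum_congr rfl fun j _ => by ring

lemma vapp_eq {m : ℕ} (v : (Fin m → ℝ) → Fin m → Fin m → ℝ)
    (F : (Fin m → ℝ) → (Fin m → ℝ)) (x : Fin m → ℝ) :
    vapp v F x = Matrix.mulVecLin (v x) (F x) := by
  funext i
  show vapp v F x i = Matrix.mulVec (v x) (F x) i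
  simp [vapp, Matrix.mulVec, dotProduct]

lemma vapp_smul_fun {m : ℕ} (v : (Fin m → ℝ) → Fin m → Fin m → ℝ)
    (f : (Fin m → ℝ) → ℝ) (F : (Fin m → ℝ) → (Fin m → ℝ)) :
    vapp v (fun y => f y • F y) = fun y => f y • vapp v F y := by
  funext y i
  simp only [vapp, Pi.smul_apply, smul_eq_mul, Finset.mul_sum]
  exact Finset.sum_congr rfl fun j _ => by ring

lemma vapp_contDiff {m : ℕ} {v : (Fin m → ℝ) → Fin m → Fin m → ℝ}
    (hv : ∀ i j, ContDiff ℝ (⊤ : ℕ∞) (fun y => v y i j))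
    {F : (Fin m → ℝ) → (Fin m → ℝ)} (hF : ∀ p, ContDiff ℝ (⊤ : ℕ∞) (fun y => F y p)) (p : Fin m) :
    ContDiff ℝ (⊤ : ℕ∞) (fun y => vapp v F y p) := by
  have : (fun y => vapp v F y p) = fun y => ∑ j, v y p j * F y j := rfl
  rw [this]
  exact ContDiff.sum fun j _ => (hv p j).mul (hF j)

lemma nInv_smul_left {m : ℕ} {v : (Fin m → ℝ) → Fin m → Fin m → ℝ}
    (hv : ∀ i j, ContDiff ℝ (⊤ : ℕ∞) (fun y => v y i j))
    (f : (Fin m → ℝ) → ℝ) (hf : ContDiff ℝ (⊤ : ℕ∞) f)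
    {X : (Fin m → ℝ) → (Fin m → ℝ)} (hX : ∀ p, ContDiff ℝ (⊤ : ℕ∞) (fun y => X y p))
    (Y : (Fin m → ℝ) → (Fin m → ℝ)) (x : Fin m → ℝ) :
    nInv v (fun y => f y • X y) Y x = f x • nInv v X Y x := by
  have hVX : ∀ p, DifferentiableAt ℝ (fun y => vapp v X y p) x :=
    fun p => (vapp_contDiff hv hX p).differentiable (by simp) |>.differentiableAt
  have hX' : ∀ p, DifferentiableAt ℝ (fun y => X y p) x :=
    fun p => (hX p).differentiable (by simp) |>.differentiableAt
  have hf' : DifferentiableAt ℝ f x := hf.differentiable (by simp) |>.differentiableAt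
  simp only [nInv, Pi.add_apply, Pi.sub_apply, vapp_smul_fun]
  rw [vapp_eq v (vapp v (bracket (fun y => f y • X y) Y)) x,
      vapp_eq v (bracket (fun y => f y • X y) Y) x,
      vapp_eq v (bracket (fun y => f y • X y) (vapp v Y)) x,
      vapp_eq v (bracket (fun y => f y • vapp v X y) Y) x,
      vapp_eq v (vapp v (bracket X Y)) x, vapp_eq v (bracket X Y) x,
      vapp_eq v (bracket X (vapp v Y)) x, vapp_eq v (bracket (vapp v X) Y) x,
      bracket_smul_left f (vapp v X) (vapp v Y) x hf' hVX,
      bracket_smul_left f X Y x hf' hX',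
      bracket_smul_left f X (vapp v Y) x hf' hX',
      bracket_smul_left f (vapp v X) Y x hf' hVX,
      vapp_eq v X x]
  simp only [map_smul, map_sub]
  module

lemma nInv_antisymm {m : ℕ} (v : (Fin m → ℝ) → Fin m → Fin m → ℝ)
    (X Y : (Fin m → ℝ) → (Fin m → ℝ)) (x : Fin m → ℝ) :
    nInv v X Y x = - nInv v Y X x := by
  simp only [nInv, Pi.add_apply, Pi.sub_apply]
  rw [vapp_eq v (vapp v (bracket X Y)) x, vapp_eq v (bracket X Y) x,
      vapp_eq v (bracket X (vapp v Y)) x, vapp_eq v (bracket (vapp v X) Y) x,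
      vapp_eq v (vapp v (bracket Y X)) x, vapp_eq v (bracket Y X) x,
      vapp_eq v (bracket Y (vapp v X)) x, vapp_eq v (bracket (vapp v Y) X) x,
      bracket_antisymm (vapp v X) (vapp v Y) x,
      bracket_antisymm X Y x, bracket_antisymm X (vapp v Y) x,
      bracket_antisymm (vapp v X) Y x]
  simp only [map_neg]
  module

lemma nInv_smul_right {m : ℕ} {v : (Fin m → ℝ) → Fin m → Fin m → ℝ}
    (hv : ∀ i j, ContDiff ℝ (⊤ : ℕ∞) (fun y => v y i j))
    (f : (Fin m → ℝ) → ℝ) (hf : ContDiff ℝ (⊤ : ℕ∞) f)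
    (Y : (Fin m → ℝ) → (Fin m → ℝ))
    {X : (Fin m → ℝ) → (Fin m → ℝ)} (hX : ∀ p, ContDiff ℝ (⊤ : ℕ∞) (fun y => X y p))
    (x : Fin m → ℝ) :
    nInv v Y (fun y => f y • X y) x = f x • nInv v Y X x := by
  rw [nInv_antisymm, nInv_smul_left hv f hf hX Y x, nInv_antisymm v Y X x]
  simp

/-- Conversely, if the Haantjes tensor of V vanishes identically, then for any pair of
eigenvector fields Xᵢ, Xⱼ (i ≠ j) with distinct eigenvalue functions, the value N(Xᵢ,Xⱼ)
lies pointwise in the span of Xᵢ and Xⱼ. -/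
theorem stmt_7 {m : ℕ} (v : (Fin m → ℝ) → Fin m → Fin m → ℝ)
    (hv : ∀ i j, ContDiff ℝ (⊤ : ℕ∞) (fun y => v y i j))
    (X : Fin m → (Fin m → ℝ) → (Fin m → ℝ))
    (hX : ∀ i p, ContDiff ℝ (⊤ : ℕ∞) (fun y => X i y p))
    (μ : Fin m → (Fin m → ℝ) → ℝ) (hμ : ∀ i, ContDiff ℝ (⊤ : ℕ∞) (μ i))
    (heig : ∀ i x, vapp v (X i) x = μ i x • X i x)
    (hne : ∀ i x, X i x ≠ 0)
    (hdist : ∀ i j x, i ≠ j → μ i x ≠ μ j x)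
    (hH : ∀ Y Z : (Fin m → ℝ) → (Fin m → ℝ),
      (∀ p, ContDiff ℝ (⊤ : ℕ∞) (fun y => Y y p)) → (∀ p, ContDiff ℝ (⊤ : ℕ∞) (fun y => Z y p)) →
      ∀ x, hInv v Y Z x = 0) :
    ∀ i j, i ≠ j → ∀ x,
      nInv v (X i) (X j) x ∈ Submodule.span ℝ {X i x, X j x} := by
  intro i j hij x
  have : Nonempty (Fin m) := ⟨i⟩
  set w := nInv v (X i) (X j) x with hw
  set T := Matrix.mulVecLin (v x) with hT
  have hVX : ∀ k, vapp v (X k) = fun y => μ k y • X k y := fun k => funext (heig k)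
  have hTX : ∀ k, T (X k x) = μ k x • X k x := by
    intro k; rw [← vapp_eq, heig]
  -- linear independence of the eigenvectors at x
  have hli : LinearIndependent ℝ (fun k => X k x) := by
    apply Module.End.eigenvectors_linearIndependent' T (fun k => μ k x)
    · intro a b hab
      by_contra h
      exact hdist a b x h hab
    · intro k
      exact ⟨Module.End.mem_eigenspace_iff.mpr (hTX k), hne k x⟩
  -- the Haantjes relation at x
  have e1 : nInv v (vapp v (X i)) (X j) x = μ i x • w := by
    rw [hVX i]; exact nInv_smul_left hv (μ i) (hμ i) (hX i) (X j) x
  have e2 : nInv v (X i) (vapp v (X j)) x = μ j x • w := by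
    rw [hVX j]; exact nInv_smul_right hv (μ j) (hμ j) (X i) (hX j) x
  have e3 : nInv v (vapp v (X i)) (vapp v (X j)) x = (μ i x * μ j x) • w := by
    rw [hVX i, nInv_smul_left hv (μ i) (hμ i) (hX i) _ x, hVX j,
        nInv_smul_right hv (μ j) (hμ j) (X i) (hX j) x, smul_smul]
  have key : T (T w) - μ i x • T w - μ j x • T w + (μ i x * μ j x) • w = 0 := by
    have h0 := hH (X i) (X j) (hX i) (hX j) x
    simp only [hInv, Pi.add_apply, Pi.sub_apply] at h0
    rw [vapp_eq v (vapp v (nInv v (X i) (X j))) x, vapp_eq v (nInv v (X i) (X j)) x,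
        vapp_eq v (nInv v (vapp v (X i)) (X j)) x,
        vapp_eq v (nInv v (X i) (vapp v (X j))) x, e1, e2, e3, map_smul, map_smul] at h0
    exact h0
  -- expand w in the eigenbasis
  obtain ⟨c, hwsum⟩ : ∃ c : Fin m → ℝ, w = ∑ k, c k • X k x := by
    have hcard : Fintype.card (Fin m) = Module.finrank ℝ (Fin m → ℝ) := by
      simp [Module.finrank_fintype_fun_eq_card]
    set b := basisOfLinearIndependentOfCardEqFinrank hli hcard with hb
    refine ⟨fun k => b.repr w k, ?_⟩
    have := (b.sum_repr w).symm
    simpa [hb, coe_basisOfLinearIndependentOfCardEqFinrank] using this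
  have hTsum : T w = ∑ k, (c k * μ k x) • X k x := by
    rw [hwsum, map_sum]
    exact Finset.sum_congr rfl fun k _ => by rw [map_smul, hTX, smul_smul]
  have hTTsum : T (T w) = ∑ k, (c k * μ k x * μ k x) • X k x := by
    rw [hTsum, map_sum]
    exact Finset.sum_congr rfl fun k _ => by rw [map_smul, hTX, smul_smul]
  have hsum0 : ∑ k, (c k * ((μ k x - μ i x) * (μ k x - μ j x))) • X k x = 0 := by
    have expand : T (T w) - μ i x • T w - μ j x • T w + (μ i x * μ j x) • w
        = ∑ k, (c k * ((μ k x - μ i x) * (μ k x - μ j x))) • X k x := by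
      rw [hTTsum, hTsum]
      conv_lhs => rw [hwsum]
      rw [Finset.smul_sum, Finset.smul_sum, Finset.smul_sum, ← Finset.sum_sub_distrib,
          ← Finset.sum_sub_distrib, ← Finset.sum_add_distrib]
      refine Finset.sum_congr rfl fun k _ => ?_
      rw [smul_smul, smul_smul, smul_smul, ← sub_smul, ← sub_smul, ← add_smul]
      congr 1; ring
    rw [← expand]; exact key
  have hcoeff := Fintype.linearIndependent_iff.mp hli _ hsum0
  rw [hwsum]
  apply Submodule.sum_mem
  intro k _
  by_cases hki : k = i
  · subst hki
    exact Submodule.smul_mem _ _ (Submodule.subset_span (Set.mem_insert _ _))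
  by_cases hkj : k = j
  · subst hkj
    exact Submodule.smul_mem _ _ (Submodule.subset_span
      (Set.mem_insert_of_mem _ rfl))
  · have hc : c k = 0 := by
      have h := hcoeff k
      have h1 : μ k x - μ i x ≠ 0 := sub_ne_zero.mpr (hdist k i x hki)
      have h2 : μ k x - μ j x ≠ 0 := sub_ne_zero.mpr (hdist k j x hkj)
      exact (mul_eq_zero.mp h).resolve_right (mul_ne_zero h1 h2)
    simp [hc]
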